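/- Let A be a unital C*-algebra with a Cuntz family ψ_1, …, ψ_d and canonical endomorphism σ, and let r, s ∈ ℕ. If t ∈ A satisfies t·σ^r(a) = σ^s(a)·t for all a ∈ A, then for all multi-indices L ∈ {1,…,d}^s and M ∈ {1,…,d}^r the element ψ_L* t ψ_M lies in the center of A, and t = Σ_{L ∈ {1,…,d}^s} Σ_{M ∈ {1,…,d}^r} ψ_L (ψ_L* t ψ_M) ψ_M*. (Every intertwiner between powers of the canonical endomorphism is a linear combination, with central coefficients, of the elements ψ_L ψ_M*.) -/
import Mathlib


/-- The ordered product `ψ_L := ψ_{l_1} ⋯ ψ_{l_r}` associated with a multi-index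
`L : Fin r → Fin d` (for `r = 0` it is `1`). -/
def psiWord {A : Type*} [Monoid A] {d r : ℕ} (ψ : Fin d → A) (L : Fin r → Fin d) : A :=
  (List.ofFn fun i => ψ (L i)).prod

/-- The canonical endomorphism `σ(t) := Σ_k ψ_k t ψ_k*` of a Cuntz family. -/
def cuntzEndo {A : Type*} [Ring A] [StarRing A] {d : ℕ} (ψ : Fin d → A) (t : A) : A :=
  ∑ k : Fin d, ψ k * t * star (ψ k)


section aux
variable {A : Type*} [Ring A] [StarRing A] {d : ℕ} (ψ : Fin d → A)
  (horth : ∀ i j, star (ψ i) * ψ j = if i = j then 1 else 0)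

lemma psiWord_cons {r : ℕ} (k : Fin d) (L : Fin r → Fin d) :
    psiWord ψ (Fin.cons k L) = ψ k * psiWord ψ L := by
  unfold psiWord
  rw [List.ofFn_succ]
  simp

include horth in
lemma star_mul_endo (i : Fin d) (b : A) :
    star (ψ i) * cuntzEndo ψ b = b * star (ψ i) := by
  unfold cuntzEndo
  rw [Finset.mul_sum]
  have h : ∀ k : Fin d, star (ψ i) * (ψ k * b * star (ψ k))
      = (if i = k then 1 else 0) * (b * star (ψ k)) := by
    intro k
    rw [show ψ k * b * star (ψ k) = ψ k * (b * star (ψ k)) from mul_assoc _ _ _,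
      ← mul_assoc, horth]
  simp [h, ite_mul]

include horth in
lemma endo_mul (i : Fin d) (b : A) :
    cuntzEndo ψ b * ψ i = ψ i * b := by
  unfold cuntzEndo
  rw [Finset.sum_mul]
  have h : ∀ k : Fin d, ψ k * b * star (ψ k) * ψ i
      = (ψ k * b) * (if k = i then 1 else 0) := by
    intro k
    rw [mul_assoc, horth]
  simp [h, mul_ite]

include horth in
lemma star_word_iter : ∀ (n : ℕ) (L : Fin n → Fin d) (a : A),
    star (psiWord ψ L) * (cuntzEndo ψ)^[n] a = a * star (psiWord ψ L) := by
  intro n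
  induction n with
  | zero => intro L a; simp [psiWord]
  | succ n ih =>
    intro L a
    rw [← Fin.cons_self_tail L, psiWord_cons, Function.iterate_succ_apply', star_mul,
      mul_assoc, star_mul_endo ψ horth, ← mul_assoc, ih, mul_assoc]

include horth in
lemma iter_mul_word : ∀ (n : ℕ) (M : Fin n → Fin d) (a : A),
    (cuntzEndo ψ)^[n] a * psiWord ψ M = psiWord ψ M * a := by
  intro n
  induction n with
  | zero => intro M a; simp [psiWord]
  | succ n ih =>
    intro M a
    rw [← Fin.cons_self_tail M, psiWord_cons, Function.iterate_succ_apply',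
      ← mul_assoc, endo_mul ψ horth, mul_assoc, ih, ← mul_assoc]

include horth in
lemma word_sum (hsum : ∑ k, ψ k * star (ψ k) = 1) :
    ∀ n : ℕ, ∑ L : Fin n → Fin d, psiWord ψ L * star (psiWord ψ L) = 1 := by
  intro n
  induction n with
  | zero => simp [psiWord]
  | succ n ih =>
    rw [← Fintype.sum_equiv (Fin.consEquiv fun _ => Fin d)
      (fun p => psiWord ψ (Fin.cons p.1 p.2) * star (psiWord ψ (Fin.cons p.1 p.2)))
      (fun L => psiWord ψ L * star (psiWord ψ L)) (fun p => rfl)]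
    rw [Fintype.sum_prod_type]
    have h : ∀ k : Fin d,
        ∑ L : Fin n → Fin d, psiWord ψ (Fin.cons k L) * star (psiWord ψ (Fin.cons k L))
        = ψ k * star (ψ k) := by
      intro k
      have : ∀ L : Fin n → Fin d,
          psiWord ψ (Fin.cons k L) * star (psiWord ψ (Fin.cons k L))
          = ψ k * (psiWord ψ L * star (psiWord ψ L)) * star (ψ k) := by
        intro L
        rw [psiWord_cons, star_mul]
        noncomm_ring
      simp only [this, ← Finset.sum_mul, ← Finset.mul_sum, ih, mul_one]
    simp [h, hsum]

end aux

/-- Every intertwiner `t` between powers `σ^r` and `σ^s` of the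
canonical endomorphism of a Cuntz family is a linear combination, with central
coefficients `ψ_L* t ψ_M`, of the elements `ψ_L ψ_M*`. -/
theorem intertwiner_expansion
    {A : Type*} [NormedRing A] [StarRing A] [CStarRing A]
    [NormedAlgebra ℂ A] [StarModule ℂ A] [CompleteSpace A]
    {d : ℕ} (hd : 0 < d) (ψ : Fin d → A)
    (horth : ∀ i j, star (ψ i) * ψ j = if i = j then 1 else 0)
    (hsum : ∑ k, ψ k * star (ψ k) = 1)
    (r s : ℕ) (t : A)
    (ht : ∀ a : A, t * (cuntzEndo ψ)^[r] a = (cuntzEndo ψ)^[s] a * t) :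
    (∀ (L : Fin s → Fin d) (M : Fin r → Fin d),
        star (psiWord ψ L) * t * psiWord ψ M ∈ Set.center A) ∧
    t = ∑ L : Fin s → Fin d, ∑ M : Fin r → Fin d,
        psiWord ψ L * (star (psiWord ψ L) * t * psiWord ψ M) * star (psiWord ψ M) := by
  constructor
  · intro L M
    rw [Semigroup.mem_center_iff]
    intro g
    have h1 : psiWord ψ M * g = (cuntzEndo ψ)^[r] g * psiWord ψ M :=
      (iter_mul_word ψ horth r M g).symm
    calc g * (star (psiWord ψ L) * t * psiWord ψ M)
        = (g * star (psiWord ψ L)) * t * psiWord ψ M := by noncomm_ring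
      _ = (star (psiWord ψ L) * (cuntzEndo ψ)^[s] g) * t * psiWord ψ M := by
          rw [star_word_iter ψ horth s L g]
      _ = star (psiWord ψ L) * ((cuntzEndo ψ)^[s] g * t) * psiWord ψ M := by noncomm_ring
      _ = star (psiWord ψ L) * (t * (cuntzEndo ψ)^[r] g) * psiWord ψ M := by rw [← ht g]
      _ = star (psiWord ψ L) * t * ((cuntzEndo ψ)^[r] g * psiWord ψ M) := by noncomm_ring
      _ = star (psiWord ψ L) * t * (psiWord ψ M * g) := by rw [iter_mul_word ψ horth r M g]
      _ = star (psiWord ψ L) * t * psiWord ψ M * g := by noncomm_ring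
  · have key : ∀ (L : Fin s → Fin d) (M : Fin r → Fin d), psiWord ψ L * (star (psiWord ψ L) * t * psiWord ψ M) * star (psiWord ψ M)
        = (psiWord ψ L * star (psiWord ψ L) * t) * (psiWord ψ M * star (psiWord ψ M)) := by
      intro L M; noncomm_ring
    simp only [key, ← Finset.mul_sum, word_sum ψ horth hsum r, mul_one, ← Finset.sum_mul,
      word_sum ψ horth hsum s, one_mul]
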